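/- Edge count of graphs in the support of an insertion: let V₁, V₂ be disjoint finite sets with * ∈ V₁ and let g₁, g₂ be simple graphs on V₁, V₂. Then every graph g in the support of g₁ ∘_* g₂ satisfies e(g) = e(g₁) + e(g₂), where e(·) denotes the number of edges. (This is the key remark in the proof of the lemma showing that graphs with too many edges cannot be generated nontrivially.) -/

import Mathlib

/-!
Common framework: a simple graph on a finite vertex set `V ⊆ α` is a finite set of
unordered pairs (`Sym2 α`) of distinct elements of `V`.  The insertion
`g₁ ∘_star g₂` is an element of the free `ℚ`-module `Finset (Sym2 α) →₀ ℚ`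
on the set of edge sets.
-/

open scoped Classical

variable {α : Type*} [DecidableEq α]

/-- The finite edge set `g` is a simple graph on the vertex set `V`. -/
def IsGraphOn (V : Finset α) (g : Finset (Sym2 α)) : Prop :=
  ∀ e ∈ g, ¬ e.IsDiag ∧ ∀ v ∈ e, v ∈ V

/-- The two endpoints of an unordered pair, as a `Finset`. -/
def sym2Finset : Sym2 α → Finset α :=
  Sym2.lift ⟨fun a b => {a, b}, by intro a b; simp [Finset.pair_comm]⟩

/-- Neighbours of `x` in the edge set `g`. -/
def nbrs (g : Finset (Sym2 α)) (x : α) : Finset α :=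
  (g.biUnion sym2Finset).filter fun v => s(x, v) ∈ g

/-- Remove the vertex `x` (and all incident edges) from the edge set `g`. -/
def delG (g : Finset (Sym2 α)) (x : α) : Finset (Sym2 α) :=
  g.filter fun e => x ∉ e

/-- The edges `{v, f v}` obtained from a reconnection map `f : C → V₂`. -/
def newEdges (C V₂ : Finset α) (f : {v // v ∈ C} → {w // w ∈ V₂}) : Finset (Sym2 α) :=
  Finset.univ.image fun v : {v // v ∈ C} => s(v.1, (f v).1)

/-- Insertion `g₁ ∘_star g₂` of a graph `g₂` on the vertex set `V₂` into a graph `g₁`: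
the sum, over all maps `f` from the neighbours of `star` in `g₁` to `V₂`, of the graph
obtained by deleting `star` from `g₁`, adding `g₂`, and reconnecting along `f`. -/
noncomputable def ins (V₂ : Finset α) (star : α) (g₁ g₂ : Finset (Sym2 α)) :
    Finset (Sym2 α) →₀ ℚ :=
  ∑ f : ({v // v ∈ nbrs g₁ star} → {w // w ∈ V₂}),
    Finsupp.single (delG g₁ star ∪ g₂ ∪ newEdges (nbrs g₁ star) V₂ f) 1

/-- Bilinear extension of the insertion to the free module on graphs. -/
noncomputable def insM (V₂ : Finset α) (star : α) (x y : Finset (Sym2 α) →₀ ℚ) :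
    Finset (Sym2 α) →₀ ℚ :=
  x.sum fun g₁ c₁ => y.sum fun g₂ c₂ => (c₁ * c₂) • ins V₂ star g₁ g₂

/-!
Deleting `star` removes one edge per neighbour of `star`, and reconnecting adds back one edge
`{v, f v}` per neighbour `v`. Since `V₁` and `V₂` are disjoint, these new edges are pairwise
distinct (their `V₁`-endpoints differ) and distinct from the edges of `g₁ \ {star}` (which lie
inside `V₁`) and of `g₂` (which lie inside `V₂`), so the three edge sets have disjoint union.
-/

lemma mem_sym2Finset {e : Sym2 α} {v : α} : v ∈ sym2Finset e ↔ v ∈ e := by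
  induction e using Sym2.ind with
  | _ a b => simp [sym2Finset]

@[simp]
lemma mem_nbrs {g : Finset (Sym2 α)} {x v : α} : v ∈ nbrs g x ↔ s(x, v) ∈ g := by
  simp only [nbrs, Finset.mem_filter, Finset.mem_biUnion, mem_sym2Finset, and_iff_right_iff_imp]
  exact fun h => ⟨_, h, Sym2.mem_mk_right x v⟩

omit [DecidableEq α] in
lemma IsGraphOn.subset_sym2 {V : Finset α} {g : Finset (Sym2 α)} (h : IsGraphOn V g) :
    g ⊆ V.sym2 :=
  fun e he => Finset.mem_sym2_iff.2 (h e he).2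

lemma nbrs_subset {V : Finset α} {g : Finset (Sym2 α)} (h : g ⊆ V.sym2) (x : α) :
    nbrs g x ⊆ V :=
  fun _ hv => (Finset.mk_mem_sym2_iff.1 (h (mem_nbrs.1 hv))).2

lemma filter_mem_eq_image_nbrs (g : Finset (Sym2 α)) (x : α) :
    g.filter (x ∈ ·) = (nbrs g x).image (s(x, ·)) := by
  ext e
  simp only [Finset.mem_filter, Finset.mem_image, mem_nbrs, Sym2.mem_iff_exists]
  constructor
  · rintro ⟨he, v, rfl⟩
    exact ⟨v, he, rfl⟩
  · rintro ⟨v, hv, rfl⟩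
    exact ⟨hv, v, rfl⟩

lemma card_delG_add_card_nbrs (g : Finset (Sym2 α)) (x : α) :
    (delG g x).card + (nbrs g x).card = g.card := by
  have hinj : Set.InjOn (s(x, ·)) (nbrs g x : Set α) := fun _ _ _ _ h => Sym2.congr_right.1 h
  rw [delG, ← Finset.card_image_of_injOn hinj, ← filter_mem_eq_image_nbrs,
    add_comm, Finset.card_filter_add_card_filter_not]

lemma card_newEdges {C V₂ : Finset α} (h : Disjoint C V₂) (f : {v // v ∈ C} → {w // w ∈ V₂}) :
    (newEdges C V₂ f).card = C.card := by
  rw [newEdges, Finset.card_image_of_injective, Finset.card_univ, Fintype.card_coe]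
  intro v w hvw
  rcases Sym2.eq_iff.1 hvw with ⟨hvw, -⟩ | ⟨hv, -⟩
  · exact Subtype.ext hvw
  · exact absurd (hv ▸ (f w).2) (Finset.disjoint_left.1 h v.2)

omit [DecidableEq α] in
lemma disjoint_sym2 {V₁ V₂ : Finset α} (hd : Disjoint V₁ V₂) : Disjoint V₁.sym2 V₂.sym2 := by
  refine Finset.disjoint_left.2 fun e he₁ he₂ => ?_
  induction e using Sym2.ind with
  | _ a b =>
    exact Finset.disjoint_left.1 hd (Finset.mk_mem_sym2_iff.1 he₁).1
      (Finset.mk_mem_sym2_iff.1 he₂).1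

lemma disjoint_newEdges {V₁ V₂ C : Finset α} (hd : Disjoint V₁ V₂) (hC : C ⊆ V₁)
    (f : {v // v ∈ C} → {w // w ∈ V₂}) : Disjoint (V₁.sym2 ∪ V₂.sym2) (newEdges C V₂ f) := by
  refine Finset.disjoint_right.2 fun e he hmem => ?_
  obtain ⟨v, -, rfl⟩ := Finset.mem_image.1 he
  rcases Finset.mem_union.1 hmem with h | h
  · exact Finset.disjoint_right.1 hd (f v).2 (Finset.mk_mem_sym2_iff.1 h).2
  · exact Finset.disjoint_left.1 hd (hC v.2) (Finset.mk_mem_sym2_iff.1 h).1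

lemma card_insertion_term {V₁ V₂ : Finset α} (hd : Disjoint V₁ V₂) (star : α)
    {g₁ g₂ : Finset (Sym2 α)} (hg₁ : g₁ ⊆ V₁.sym2) (hg₂ : g₂ ⊆ V₂.sym2)
    (f : {v // v ∈ nbrs g₁ star} → {w // w ∈ V₂}) :
    (delG g₁ star ∪ g₂ ∪ newEdges (nbrs g₁ star) V₂ f).card = g₁.card + g₂.card := by
  have hdel : delG g₁ star ⊆ V₁.sym2 := (Finset.filter_subset _ _).trans hg₁
  have hN : nbrs g₁ star ⊆ V₁ := nbrs_subset hg₁ star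
  rw [Finset.card_union_of_disjoint
      ((disjoint_newEdges hd hN f).mono_left (Finset.union_subset_union hdel hg₂)),
    Finset.card_union_of_disjoint ((disjoint_sym2 hd).mono hdel hg₂),
    card_newEdges (Finset.disjoint_of_subset_left hN hd) f, ← card_delG_add_card_nbrs g₁ star]
  ring

lemma exists_eq_of_mem_support_ins {V₂ : Finset α} {star : α} {g₁ g₂ g : Finset (Sym2 α)}
    (hg : g ∈ (ins V₂ star g₁ g₂).support) :
    ∃ f, g = delG g₁ star ∪ g₂ ∪ newEdges (nbrs g₁ star) V₂ f := by
  obtain ⟨f, -, hf⟩ := Finset.mem_biUnion.1 (Finsupp.support_finsetSum hg)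
  exact ⟨f, Finset.mem_singleton.1 (Finsupp.support_single_subset hf)⟩

theorem edge_count_of_insertion_support_general
    (V₁ V₂ : Finset α) (star : α)
    (hd : Disjoint V₁ V₂)
    (g₁ g₂ : Finset (Sym2 α)) (hg₁ : IsGraphOn V₁ g₁) (hg₂ : IsGraphOn V₂ g₂) :
    ∀ g ∈ (ins V₂ star g₁ g₂).support, g.card = g₁.card + g₂.card := by
  intro g hg
  obtain ⟨f, rfl⟩ := exists_eq_of_mem_support_ins hg
  exact card_insertion_term hd star hg₁.subset_sym2 hg₂.subset_sym2 f

/-- **Edge count of graphs in the support of an insertion**: every graph in the support of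
`g₁ ∘_star g₂` has exactly `e(g₁) + e(g₂)` edges. -/
theorem edge_count_of_insertion_support
    (V₁ V₂ : Finset α) (star : α)
    (hd : Disjoint V₁ V₂) (hstar : star ∈ V₁)
    (g₁ g₂ : Finset (Sym2 α)) (hg₁ : IsGraphOn V₁ g₁) (hg₂ : IsGraphOn V₂ g₂) :
    ∀ g ∈ (ins V₂ star g₁ g₂).support, g.card = g₁.card + g₂.card :=
  edge_count_of_insertion_support_general V₁ V₂ star hd g₁ g₂ hg₁ hg₂
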